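/- The higher Euler operators satisfy the closure identity δ_{i,t} ∘ δ_j = (−1)^t ∂_{j,t} ∘ δ_i on the differential polynomial algebra 𝒜, for all i, j and all t ≥ 0; both sides equal the operator (−1)^t Σ_{p,q≥0} (−1)^p C(p, t−q) ∂^{p+q−t} ∘ ∂_{i,p} ∘ ∂_{j,q}. -/

import Mathlib

open MvPolynomial

/-- The differential polynomial algebra `𝒜` in the variables `u^{i,s}`,
`1 ≤ i ≤ n`, `s ≥ 0`. -/
abbrev DP (n : ℕ) : Type := MvPolynomial (Fin n × ℕ) ℝ

/-- The total derivative `∂ = Σ u^{i,s+1} ∂_{i,s}` (on each differential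
polynomial only finitely many terms act nontrivially). -/
noncomputable def totalDer {n : ℕ} (f : DP n) : DP n :=
  ∑ v ∈ f.vars, X (v.1, v.2 + 1) * pderiv v f

/-- A bound such that `∂_{i,k} f = 0` for all `k ≥ vbound f`. -/
noncomputable def vbound {n : ℕ} (f : DP n) : ℕ := (f.vars.sup (fun v => v.2)) + 1

/-- The higher generalized momentum operator
`p_{i,α,s} = Σ_{t≥0} (-1)^t C(t+s,s) ∂^t ∘ ∂_{i,α+s+t}`; the sum is finite on each
differential polynomial, and is truncated at a sufficiently large bound. -/
noncomputable def pmom {n : ℕ} (i : Fin n) (α s : ℕ) (f : DP n) : DP n :=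
  ∑ t ∈ Finset.range (vbound f),
    ((-1 : ℝ) ^ t * (Nat.choose (t + s) s : ℝ)) • totalDer^[t] (pderiv (i, α + s + t) f)

/-- The higher energy operator `E_s = Σ_{α≥1} u^{i,α} p_{i,α,s}`. -/
noncomputable def Eop {n : ℕ} (s : ℕ) (f : DP n) : DP n :=
  ∑ i : Fin n, ∑ α ∈ Finset.Icc 1 (vbound f), X (i, α) * pmom i α s f

/-- The energy operator `E = E₀ - 1`. -/
noncomputable def Ener {n : ℕ} (f : DP n) : DP n := Eop 0 f - f

/-- The explicit operator `(-1)^t Σ_{p,q≥0} (-1)^p C(p, t-q) ∂^{p+q-t} ∂_{i,p} ∂_{j,q}`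
(with the convention `C(p,m) = 0` for `m < 0`, and the sum truncated at a
sufficiently large bound). -/
noncomputable def eulerExpl {n : ℕ} (i j : Fin n) (t : ℕ) (f : DP n) : DP n :=
  ((-1 : ℝ) ^ t) • ∑ p ∈ Finset.range (vbound f), ∑ q ∈ Finset.range (vbound f),
    ((-1 : ℝ) ^ p * (if q ≤ t then (Nat.choose p (t - q) : ℝ) else 0)) •
      totalDer^[p + q - t] (pderiv (i, p) (pderiv (j, q) f))

/-!
The total derivative `∂` is the derivation `u^{i,s} ↦ u^{i,s+1}`, so `[∂_{i,k}, ∂] = ∂_{i,k-1}`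
(and `∂_{i,0}` commutes with `∂`). Iterating this gives
`∂_{j,t} ∘ ∂^p = Σ_r C(p,r) ∂^{p-r} ∘ ∂_{j,t-r}`, which expands `(-1)^t ∂_{j,t} ∘ δ_i` into the
explicit operator. On the other side, summation by parts with Pascal's rule gives
`δ_{i,t+1} ∘ ∂ = δ_{i,t}` and `δ_{i,0} ∘ ∂ = 0`, hence `δ_{i,t} ∘ ∂^q = δ_{i,t-q}` for `q ≤ t` and
`0` otherwise. Applied to `δ_j = Σ_q (-1)^q ∂^q ∘ ∂_{j,q}`, this gives the same explicit operator.
-/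

open Finset

namespace MvPolynomial

variable {σ R : Type*} [CommSemiring R]

theorem pderiv_pderiv_comm (v w : σ) (f : MvPolynomial σ R) :
    pderiv v (pderiv w f) = pderiv w (pderiv v f) := by
  classical
  induction f using MvPolynomial.induction_on with
  | C a => simp
  | add p q hp hq => simp only [map_add, hp, hq]
  | mul_X p u hp =>
    simp only [pderiv_mul, map_add, pderiv_X, hp, Pi.single_apply, apply_ite (pderiv _),
      pderiv_one, map_zero, ite_self, mul_zero, add_zero]
    ring

theorem vars_pderiv_subset (v : σ) (f : MvPolynomial σ R) : (pderiv v f).vars ⊆ f.vars := by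
  classical
  intro w hw
  obtain ⟨m, hm, hwm⟩ := (mem_vars_iff_mem_support w).1 hw
  rw [mem_support_iff, coeff_pderiv] at hm
  refine (mem_vars_iff_mem_support w).2
    ⟨m + Finsupp.single v 1, mem_support_iff.2 (left_ne_zero_of_mul hm), ?_⟩
  rw [Finsupp.mem_support_iff] at hwm ⊢
  simp [hwm]

end MvPolynomial

theorem mul_pow_eq_sum_range_choose {A : Type*} [Semiring A] {D : A} {E : ℤ → A}
    (h : ∀ z, E z * D = D * E z + E (z - 1)) (m : ℕ) (z : ℤ) :
    E z * D ^ m = ∑ r ∈ range (m + 1), m.choose r • (D ^ (m - r) * E (z - r)) := by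
  induction m generalizing z with
  | zero => simp
  | succ m ih =>
    rw [sum_choose_succ_nsmul (fun r s => D ^ s * E (z - r)), pow_succ', ← mul_assoc, h,
      add_mul, mul_assoc, ih, ih, mul_sum]
    congr 1
    · refine sum_congr rfl fun r hr => ?_
      rw [mul_smul_comm, ← mul_assoc, ← pow_succ',
        Nat.sub_add_comm (Nat.lt_succ_iff.1 (mem_range.1 hr))]
    · refine sum_congr rfl fun r _ => ?_
      rw [Nat.cast_succ, ← sub_sub, sub_right_comm]

theorem Finset.sum_range_smul_succ_add_sum_range_smul_of_pascal {R M : Type*} [Semiring R]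
    [AddCommMonoid M] [Module R M] {a c : ℕ → R} {G : ℕ → M} (h0 : c 0 = a 0)
    (hsucc : ∀ b, c (b + 1) = a (b + 1) + a b) {N : ℕ} (hN : G N = 0) :
    ∑ b ∈ range N, a b • G (b + 1) + ∑ b ∈ range N, a b • G b = ∑ b ∈ range N, c b • G b := by
  cases N with
  | zero => simp
  | succ N =>
    rw [sum_range_succ, hN, smul_zero, add_zero, sum_range_succ' (fun b => c b • G b),
      sum_range_succ' (fun b => a b • G b)]
    simp only [hsucc, h0, add_smul, sum_add_distrib]
    abel

section DifferentialPolynomials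

variable {n : ℕ}

noncomputable def totalDerivation : Derivation ℝ (DP n) (DP n) :=
  mkDerivation ℝ fun v => X (v.1, v.2 + 1)

local notation "𝔇" => (totalDerivation.toLinearMap : Module.End ℝ (DP _))

theorem totalDerivation_apply (f : DP n) : totalDerivation f = totalDer f := by
  classical
  set D : Derivation ℝ (DP n) (DP n) := ∑ v ∈ f.vars, (X (v.1, v.2 + 1) : DP n) • pderiv v
  have hD (g : DP n) : D g = ∑ v ∈ f.vars, X (v.1, v.2 + 1) * pderiv v g := by
    rw [← Derivation.coeFnAddMonoidHom_apply, map_sum, Finset.sum_apply]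
    rfl
  rw [totalDer, ← hD]
  refine derivation_eq_of_forall_mem_vars fun u hu => ?_
  simp [hD, totalDerivation, mkDerivation_X, pderiv_X, Pi.single_apply, hu]

theorem totalDer_iterate_apply (b : ℕ) (f : DP n) : totalDer^[b] f = (𝔇 ^ b) f := by
  rw [Module.End.pow_apply]
  congr 1
  funext g
  exact (totalDerivation_apply g).symm

theorem pderiv_succ_totalDer (i : Fin n) (k : ℕ) (f : DP n) :
    pderiv (i, k + 1) (totalDer f) = totalDer (pderiv (i, k + 1) f) + pderiv (i, k) f := by
  have h : ⁅(pderiv (i, k + 1) : Derivation ℝ (DP n) (DP n)), totalDerivation⁆ = pderiv (i, k) := by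
    classical
    refine derivation_ext fun v => ?_
    rw [Derivation.commutator_apply, pderiv_X]
    simp only [Pi.single_apply, apply_ite totalDerivation, Derivation.map_one_eq_zero, map_zero]
    simp [totalDerivation, mkDerivation_X, pderiv_X, Pi.single_apply, Prod.ext_iff]
  have := congr($h f)
  rw [Derivation.commutator_apply, totalDerivation_apply, totalDerivation_apply] at this
  rw [← this]
  abel

theorem pderiv_zero_totalDer (i : Fin n) (f : DP n) :
    pderiv (i, 0) (totalDer f) = totalDer (pderiv (i, 0) f) := by
  have h : ⁅(pderiv (i, 0) : Derivation ℝ (DP n) (DP n)), totalDerivation⁆ =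
      (0 : Derivation ℝ (DP n) (DP n)) := by
    classical
    refine derivation_ext fun v => ?_
    rw [Derivation.commutator_apply, pderiv_X]
    simp only [Pi.single_apply, apply_ite totalDerivation, Derivation.map_one_eq_zero, map_zero]
    simp [totalDerivation, mkDerivation_X, pderiv_X, Prod.ext_iff]
  have := congr($h f)
  rwa [Derivation.commutator_apply, totalDerivation_apply, totalDerivation_apply,
    Derivation.zero_apply, sub_eq_zero] at this

/-- `∂_{i,z}` for an integer index `z`, zero when `z < 0`: with this convention
`[∂_{i,z}, ∂] = ∂_{i,z-1}` holds for every `z`. -/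
noncomputable def pderivInt (i : Fin n) (z : ℤ) : Module.End ℝ (DP n) :=
  if 0 ≤ z then (pderiv (i, z.toNat)).toLinearMap else 0

theorem pderivInt_natCast_apply (i : Fin n) (k : ℕ) (f : DP n) :
    pderivInt i k f = pderiv (i, k) f := by
  simp [pderivInt]

theorem pderivInt_of_neg (i : Fin n) {z : ℤ} (hz : z < 0) : pderivInt i z = 0 := by
  simp [pderivInt, hz.not_ge]

theorem pderivInt_mul_totalDerivation (i : Fin n) (z : ℤ) :
    pderivInt i z * 𝔇 = 𝔇 * pderivInt i z + pderivInt i (z - 1) := by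
  rcases lt_or_ge z 0 with hz | hz
  · simp [pderivInt_of_neg i hz, pderivInt_of_neg i (z := z - 1) (by omega)]
  lift z to ℕ using hz
  refine LinearMap.ext fun f => ?_
  simp only [Module.End.mul_apply, LinearMap.add_apply, Derivation.coeFn_coe,
    totalDerivation_apply, pderivInt_natCast_apply]
  cases z with
  | zero => simp [pderiv_zero_totalDer, pderivInt_of_neg]
  | succ k => simpa [pderivInt_natCast_apply] using pderiv_succ_totalDer i k f

theorem pderivInt_totalDer (i : Fin n) (z : ℤ) (f : DP n) :
    pderivInt i z (totalDer f) = totalDer (pderivInt i z f) + pderivInt i (z - 1) f := by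
  simpa [← totalDerivation_apply] using congr($(pderivInt_mul_totalDerivation i z) f)

theorem lt_vbound_of_mem_vars {v : Fin n × ℕ} {f : DP n} (h : v ∈ f.vars) : v.2 < vbound f :=
  Nat.lt_succ_of_le (le_sup (f := Prod.snd) h)

theorem pderiv_eq_zero_of_vbound_le (i : Fin n) {k : ℕ} {f : DP n} (h : vbound f ≤ k) :
    pderiv (i, k) f = 0 :=
  pderiv_eq_zero_of_notMem_vars fun hk => (lt_vbound_of_mem_vars hk).not_ge h

theorem vbound_pderiv_le (v : Fin n × ℕ) (f : DP n) : vbound (pderiv v f) ≤ vbound f :=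
  Nat.add_le_add_right (sup_mono (vars_pderiv_subset v f)) 1

theorem vbound_totalDer_le (f : DP n) : vbound (totalDer f) ≤ vbound f + 1 := by
  classical
  refine Nat.add_le_add_right (Finset.sup_le fun w hw => ?_) 1
  obtain ⟨v, hv, hw⟩ := mem_biUnion.1 (vars_sum_subset _ _ hw)
  rcases mem_union.1 (vars_mul _ _ hw) with hw | hw
  · rw [vars_X, mem_singleton] at hw
    subst hw
    exact lt_vbound_of_mem_vars hv
  · exact (lt_vbound_of_mem_vars (vars_pderiv_subset v f hw)).le

theorem pmom_eq_sum_range (i : Fin n) (α s : ℕ) {f : DP n} {N : ℕ} (h : vbound f ≤ N) :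
    pmom i α s f = ∑ b ∈ range N,
      ((-1 : ℝ) ^ b * (b + s).choose s) • (𝔇 ^ b) (pderiv (i, α + s + b) f) := by
  simp only [pmom, totalDer_iterate_apply]
  refine (eventually_constant_sum (fun b hb => ?_) h).symm
  rw [pderiv_eq_zero_of_vbound_le i (by omega), map_zero, smul_zero]

noncomputable def pmomLinear (i : Fin n) (α s : ℕ) : Module.End ℝ (DP n) where
  toFun := pmom i α s
  map_add' f g := by
    have h {u : DP n} :=
      pmom_eq_sum_range i α s (f := u) (N := vbound f + vbound g + vbound (f + g))
    rw [h (by omega), h (by omega), h (by omega), ← sum_add_distrib]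
    simp only [map_add, smul_add]
  map_smul' c f := by
    have h {u : DP n} := pmom_eq_sum_range i α s (f := u) (N := vbound f + vbound (c • f))
    rw [h (by omega), h (by omega), smul_sum]
    simp only [Derivation.map_smul, LinearMap.map_smul, RingHom.id_apply]
    exact sum_congr rfl fun b _ => smul_comm _ _ _

theorem pmom_succ_totalDer (i : Fin n) (α s : ℕ) (u : DP n) :
    pmom i α (s + 1) (totalDer u) = pmom i α s u := by
  set G : ℕ → DP n := fun b => (𝔇 ^ b) (pderiv (i, α + s + b) u)
  have hsplit (b : ℕ) :
      (𝔇 ^ b) (pderiv (i, α + (s + 1) + b) (totalDer u)) = G (b + 1) + G b := by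
    rw [show α + (s + 1) + b = α + s + b + 1 by omega, pderiv_succ_totalDer, map_add,
      ← totalDerivation_apply, ← Derivation.coeFn_coe, ← Module.End.mul_apply, ← pow_succ]
    rfl
  rw [pmom_eq_sum_range i α (s + 1) (vbound_totalDer_le u),
    pmom_eq_sum_range i α s (N := vbound u + 1) (by omega)]
  simp only [hsplit, smul_add, sum_add_distrib]
  refine sum_range_smul_succ_add_sum_range_smul_of_pascal (by simp) (fun b => ?_)
    (by simp [G, pderiv_eq_zero_of_vbound_le i (by omega : vbound u ≤ α + s + (vbound u + 1))])
  rw [show b + 1 + (s + 1) = b + 1 + s + 1 by ring, Nat.choose_succ_succ',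
    show b + (s + 1) = b + 1 + s by ring]
  push_cast
  ring

theorem pmom_zero_zero_totalDer (i : Fin n) (u : DP n) : pmom i 0 0 (totalDer u) = 0 := by
  set K : ℕ → DP n := fun b => (𝔇 ^ b) (pderivInt i (b - 1) u)
  have hsplit (b : ℕ) : (𝔇 ^ b) (pderiv (i, 0 + 0 + b) (totalDer u)) = K (b + 1) + K b := by
    rw [zero_add, zero_add, ← pderivInt_natCast_apply, pderivInt_totalDer, map_add,
      ← totalDerivation_apply, ← Derivation.coeFn_coe, ← Module.End.mul_apply, ← pow_succ]
    simp [K]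
  rw [pmom_eq_sum_range i 0 0 (vbound_totalDer_le u)]
  simp only [hsplit, smul_add, sum_add_distrib]
  rw [sum_range_smul_succ_add_sum_range_smul_of_pascal (c := fun b => if b = 0 then 1 else 0)
    (by simp) (fun b => by simp [pow_succ])
    (by simp [K, pderivInt_natCast_apply, pderiv_eq_zero_of_vbound_le])]
  simp [K, pderivInt_of_neg]

theorem pmom_zero_iterate_totalDer (i : Fin n) (t q : ℕ) (u : DP n) :
    pmom i 0 t (totalDer^[q] u) = if q ≤ t then pmom i 0 (t - q) u else 0 := by
  induction q generalizing t with
  | zero => simp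
  | succ q ih =>
    rw [Function.iterate_succ_apply']
    cases t with
    | zero => simp [pmom_zero_zero_totalDer]
    | succ t =>
      rw [pmom_succ_totalDer, ih]
      simp only [Nat.add_le_add_iff_right, Nat.add_sub_add_right]

theorem pmom_zero_eq_sum_range (i : Fin n) (c : ℕ) {g : DP n} {M : ℕ} (hg : vbound g ≤ M) :
    pmom i 0 c g = ∑ p ∈ range M,
      ((-1 : ℝ) ^ (p + c) * p.choose c) • (𝔇 ^ (p - c)) (pderiv (i, p) g) := by
  set F : ℕ → DP n := fun p =>
    ((-1 : ℝ) ^ (p + c) * p.choose c) • (𝔇 ^ (p - c)) (pderiv (i, p) g)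
  have hF_large (p : ℕ) (hp : p ≥ M) : F p = 0 := by
    simp [F, pderiv_eq_zero_of_vbound_le i (hg.trans hp)]
  have hF_small : ∑ p ∈ range c, F p = 0 :=
    sum_eq_zero fun p hp => by simp [F, Nat.choose_eq_zero_of_lt (mem_range.1 hp)]
  rw [pmom_eq_sum_range i 0 c hg, ← eventually_constant_sum hF_large (n := c + M) (by omega),
    Finset.sum_range_add, hF_small, zero_add, zero_add]
  refine sum_congr rfl fun b _ => ?_
  simp only [F, add_comm c b, Nat.add_sub_cancel]
  rw [add_assoc, ← two_mul, pow_add, pow_mul, neg_one_sq, one_pow, mul_one]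

theorem pderiv_totalDer_pow_apply (j : Fin n) (t p : ℕ) (g : DP n) :
    pderiv (j, t) ((𝔇 ^ p) g) = ∑ q ∈ range (t + 1),
      (p.choose (t - q) : ℝ) • (𝔇 ^ (p + q - t)) (pderiv (j, q) g) := by
  set F : ℕ → DP n := fun r => (p.choose r : ℝ) • (𝔇 ^ (p - r)) (pderivInt j (t - r) g)
  have hexpand : pderiv (j, t) ((𝔇 ^ p) g) = ∑ r ∈ range (p + 1), F r := by
    have := congr($(mul_pow_eq_sum_range_choose (pderivInt_mul_totalDerivation j) p t) g)
    simpa [F, pderivInt_natCast_apply, LinearMap.sum_apply, Nat.cast_smul_eq_nsmul] using this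
  have hF_choose (r : ℕ) (hr : r ≥ p + 1) : F r = 0 := by
    simp [F, Nat.choose_eq_zero_of_lt (by omega : p < r)]
  have hF_neg (r : ℕ) (hr : r ≥ t + 1) : F r = 0 := by
    simp [F, pderivInt_of_neg j (by omega : (t : ℤ) - r < 0)]
  rw [hexpand, ← eventually_constant_sum hF_choose (n := p + t + 1) (by omega),
    eventually_constant_sum hF_neg (by omega), ← sum_range_reflect]
  refine sum_congr rfl fun q hq => ?_
  have hq : q ≤ t := Nat.lt_succ_iff.1 (mem_range.1 hq)
  simp only [F, Nat.add_sub_cancel, Nat.cast_sub hq, sub_sub_cancel, pderivInt_natCast_apply]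
  rw [show p - (t - q) = p + q - t by omega]

theorem neg_one_pow_smul_pderiv_pmom_eq_eulerExpl (i j : Fin n) (t : ℕ) (f : DP n) :
    ((-1 : ℝ) ^ t) • pderiv (j, t) (pmom i 0 0 f) = eulerExpl i j t f := by
  rw [eulerExpl, pmom_eq_sum_range i 0 0 le_rfl, map_sum]
  congr 1
  refine sum_congr rfl fun p _ => ?_
  set h : ℕ → DP n := fun q => ((-1 : ℝ) ^ p * if q ≤ t then (p.choose (t - q) : ℝ) else 0) •
    totalDer^[p + q - t] (pderiv (i, p) (pderiv (j, q) f))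
  have hh_large (q : ℕ) (hq : q ≥ vbound f) : h q = 0 := by
    simp [h, pderiv_eq_zero_of_vbound_le j hq, totalDer_iterate_apply]
  have hh_gt (q : ℕ) (hq : q ≥ t + 1) : h q = 0 := by
    simp [h, show ¬ q ≤ t by omega]
  rw [← eventually_constant_sum hh_large (n := vbound f + t + 1) (by omega),
    eventually_constant_sum hh_gt (by omega), Derivation.map_smul, pderiv_totalDer_pow_apply,
    smul_sum]
  refine sum_congr rfl fun q hq => ?_
  simp only [h, if_pos (Nat.lt_succ_iff.1 (mem_range.1 hq)), totalDer_iterate_apply,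
    pderiv_pderiv_comm (i, p), smul_smul, zero_add, add_zero, Nat.choose_zero_right,
    Nat.cast_one, mul_one]

theorem pmom_pmom_eq_eulerExpl (i j : Fin n) (t : ℕ) (f : DP n) :
    pmom i 0 t (pmom j 0 0 f) = eulerExpl i j t f := by
  rw [pmom_eq_sum_range j 0 0 (f := f) le_rfl]
  change pmomLinear i 0 t _ = _
  rw [map_sum, eulerExpl, sum_comm, smul_sum]
  refine sum_congr rfl fun q _ => ?_
  rw [LinearMap.map_smul, smul_sum]
  change _ • pmom i 0 t _ = _
  rw [← totalDer_iterate_apply, pmom_zero_iterate_totalDer]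
  split_ifs with hq
  · rw [pmom_zero_eq_sum_range i (t - q) (vbound_pderiv_le _ f), smul_sum]
    refine sum_congr rfl fun p _ => ?_
    rw [zero_add, zero_add, smul_smul, smul_smul, pderiv_pderiv_comm, totalDer_iterate_apply,
      show p - (t - q) = p + q - t by omega]
    congr 1
    rw [add_zero, Nat.choose_zero_right, Nat.cast_one, mul_one, ← mul_assoc, ← pow_add,
      show q + (p + (t - q)) = t + p by omega, pow_add, mul_assoc]
  · simp

end DifferentialPolynomials

/-- Closure identity for the higher Euler operators: `δ_{i,t} ∘ δ_j = (-1)^t ∂_{j,t} ∘ δ_i`,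
both sides being equal to the explicit operator
`(-1)^t Σ_{p,q≥0} (-1)^p C(p,t-q) ∂^{p+q-t} ∂_{i,p} ∂_{j,q}`.
Here `δ_{i,t} = p_{i,0,t}` and `δ_j = p_{j,0,0}`. -/
theorem stmt3 {n : ℕ} (i j : Fin n) (t : ℕ) (f : DP n) :
    pmom i 0 t (pmom j 0 0 f) = ((-1 : ℝ) ^ t) • pderiv (j, t) (pmom i 0 0 f) ∧
    pmom i 0 t (pmom j 0 0 f) = eulerExpl i j t f :=
  ⟨(pmom_pmom_eq_eulerExpl i j t f).trans (neg_one_pow_smul_pderiv_pmom_eq_eulerExpl i j t f).symm,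
    pmom_pmom_eq_eulerExpl i j t f⟩
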